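/- For all x > 0, (1 − e^{−x})(1 − e^{−1/x})·(1/x + x) ≤ 1. -/

import Mathlib

/-!
Write `a = 1 - e^{-x}` and `b = 1 - e^{-1/x}`, both in `[0, 1]`. The Padé bound
`1 - e^{-t} ≤ 2t / (2 + t)` (one differentiation away from `1 + t ≤ e^t`) gives
`a ≤ 2x / (2 + x)` and `b ≤ 2 / (2x + 1)`. For `1/2 ≤ x ≤ 2` the product of both bounds with
`x + 1/x` is `4 (x² + 1) / ((2 + x)(2x + 1)) ≤ 1`; for `x < 1/2` the bound on `a` alone gives
`a (x + 1/x) ≤ 2 (x² + 1) / (2 + x) ≤ 1`, and `x > 2` is symmetric under `x ↦ 1/x`.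
-/

open Real

theorem Real.one_sub_exp_neg_mul_two_add_le {t : ℝ} (ht : 0 ≤ t) :
    (1 - exp (-t)) * (2 + t) ≤ 2 * t := by
  set f : ℝ → ℝ := fun u ↦ 2 * u - (1 - exp (-u)) * (2 + u)
  have hf_deriv (u : ℝ) : HasDerivAt f (1 - (1 + u) * exp (-u)) u := by
    have := ((hasDerivAt_id u).const_mul 2).sub
      (((hasDerivAt_neg u).exp.const_sub 1).mul ((hasDerivAt_id u).const_add 2))
    exact this.congr_deriv (by simp only [id]; ring)
  -- `f' u = 1 - (1 + u) e^{-u} ≥ 0` is `1 + u ≤ e^u`.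
  have hf_mono : Monotone f := by
    refine monotone_of_deriv_nonneg (fun u ↦ (hf_deriv u).differentiableAt) fun u ↦ ?_
    rw [(hf_deriv u).deriv, sub_nonneg, ← le_div_iff₀ (exp_pos _), exp_neg, div_inv_eq_mul,
      one_mul, add_comm]
    exact add_one_le_exp u
  have := hf_mono ht
  simp only [f, neg_zero, exp_zero] at this
  linarith

theorem mul_add_le_one_of_le_half {a x y : ℝ} (ha : 0 ≤ a) (hy : 0 ≤ y) (hxy : x * y = 1)
    (hx : x ≤ 1 / 2) (hax : a * (2 + x) ≤ 2 * x) : a * (x + y) ≤ 1 := by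
  have hay : a * (2 * y + 1) ≤ 2 := by nlinarith
  nlinarith

theorem mul_mul_add_le_one {a b x y : ℝ} (hx : 0 < x) (hy : 0 < y) (hxy : x * y = 1)
    (ha : 0 ≤ a) (ha1 : a ≤ 1) (hb : 0 ≤ b) (hb1 : b ≤ 1)
    (hax : a * (2 + x) ≤ 2 * x) (hby : b * (2 + y) ≤ 2 * y) : a * b * (x + y) ≤ 1 := by
  rcases le_or_gt x (1 / 2) with hx2 | hx2
  · calc a * b * (x + y) ≤ a * (x + y) := by
          rw [mul_right_comm]; exact mul_le_of_le_one_right (by positivity) hb1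
      _ ≤ 1 := mul_add_le_one_of_le_half ha hy.le hxy hx2 hax
  rcases le_or_gt y (1 / 2) with hy2 | hy2
  · calc a * b * (x + y) ≤ b * (y + x) := by
          rw [mul_comm a, add_comm x, mul_right_comm]
          exact mul_le_of_le_one_right (by positivity) ha1
      _ ≤ 1 := mul_add_le_one_of_le_half hb hx.le (by rwa [mul_comm]) hy2 hby
  -- Now `x, y < 2`, and `(2 - x)(2 - y) = 5 - 2 (x + y)` since `x y = 1`.
  have hxy_sum : 4 * (x + y) ≤ (2 + x) * (2 + y) := by nlinarith
  have hprod : a * b * ((2 + x) * (2 + y)) ≤ 4 := by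
    nlinarith [mul_le_mul hax hby (by positivity) (by positivity)]
  nlinarith [mul_le_mul_of_nonneg_left hxy_sum (mul_nonneg ha hb)]

/-- For all `x > 0`, `(1 − e^{−x})(1 − e^{−1/x})(1/x + x) ≤ 1`. -/
theorem relative_coverage_le_one (x : ℝ) (hx : 0 < x) :
    (1 - exp (-x)) * (1 - exp (-(1 / x))) * (1 / x + x) ≤ 1 := by
  have hx' : 0 < 1 / x := by positivity
  have h_mem {t : ℝ} (ht : 0 < t) : 0 ≤ 1 - exp (-t) ∧ 1 - exp (-t) ≤ 1 :=
    ⟨sub_nonneg.2 (exp_le_one_iff.2 (by linarith)), by linarith [exp_pos (-t)]⟩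
  rw [add_comm]
  exact mul_mul_add_le_one hx hx' (by field_simp) (h_mem hx).1 (h_mem hx).2
    (h_mem hx').1 (h_mem hx').2 (one_sub_exp_neg_mul_two_add_le hx.le)
    (one_sub_exp_neg_mul_two_add_le hx'.le)
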